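/- Let 0 ≤ j ≤ n-1. For every P ∈ MvPolynomial (Fin n) 𝔽_p with aeval(h) P = d_{n,j} (where aeval(h) substitutes h_1, …, h_n for the n variables), the exponent vector e with e_t = 0 for 1 ≤ t ≤ j and e_t = 1 for j+1 ≤ t ≤ n lies in the support of P with coefficient 1 (that is, the monomial h_{j+1} h_{j+2} ⋯ h_n occurs in d_{n,j} with coefficient 1), and e is the unique element of the support of P whose coordinates are weakly increasing (e_1 ≤ e_2 ≤ ⋯ ≤ e_n), i.e. the unique admissible monomial of d_{n,j}. -/

import Mathlib

/-!
Each `f_k` is `p`-linearized (only the monomials `X ^ p ^ i` occur), hence additive and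
`𝔽_p`-linear as a function. As `V_{k+1} = V_k + 𝔽_p y_{k+1}`, this gives
`f_{k+1} = ∏_c (f_k - c f_k(y_{k+1})) = f_k ^ p - h_{k+1} f_k`, and comparing coefficients yields
Dickson's recursion `d_{k+1,0} = h_{k+1} d_{k,0}`, `d_{k+1,i+1} = d_{k,i} ^ p + h_{k+1} d_{k,i+1}`.
So `d_{n,j}` is the image under `x_t ↦ h_t` of the polynomial `D_{n,j}` obeying the same recursion
in free variables, and `P = D_{n,j}` because the `h_t` are algebraically independent: for the weight
`y_t ↦ t`, the unique heaviest monomial of `h_t` is a power of `y_t` with coefficient `1`, so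
distinct monomials in the `h_t` have distinct leading monomials.

By induction along the recursion, `x_{i+1} ⋯ x_k` occurs in `D_{k,i}` with coefficient `1` and is
its only weakly increasing monomial: the terms of `x_k D_{k-1,i}` reduce to `D_{k-1,i}`, and
a weakly increasing monomial of `D_{k-1,i-1} ^ p` would be `(x_i ⋯ x_{k-1}) ^ p`, which drops at
`x_k`.
-/

open MvPolynomial

/-- `V p n k` : the set of `𝔽_p`-linear combinations of the first `k` variables. -/
noncomputable def V (p n k : ℕ) [Fact p.Prime] : Finset (MvPolynomial (Fin n) (ZMod p)) :=
  (Finset.univ : Finset (Fin n → ZMod p)).image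
    (fun c => ∑ j ∈ Finset.univ.filter (fun j : Fin n => j.val < k), C (c j) * X j)

/-- `f p n k = ∏_{u ∈ V_k} (X - C u)`. -/
noncomputable def f (p n k : ℕ) [Fact p.Prime] :
    Polynomial (MvPolynomial (Fin n) (ZMod p)) :=
  ∏ u ∈ V p n k, (Polynomial.X - Polynomial.C u)

/-- Dickson invariant `d_{k,i}`. -/
noncomputable def d (p n k i : ℕ) [Fact p.Prime] : MvPolynomial (Fin n) (ZMod p) :=
  (-1) ^ (k - i) * (f p n k).coeff (p ^ i)

/-- Borel generator: `hGen p n j` is `h_{j+1}` of the paper. -/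
noncomputable def hGen (p n : ℕ) [Fact p.Prime] (j : Fin n) : MvPolynomial (Fin n) (ZMod p) :=
  (Polynomial.eval (X j) (f p n j.val)) ^ (p - 1)

/-- Action of `GL_n(𝔽_p)` on `S` by linear substitution `g · y_j = ∑_i g_{ij} y_i`. -/
noncomputable def gact (p n : ℕ) [Fact p.Prime] (g : GL (Fin n) (ZMod p)) :
    MvPolynomial (Fin n) (ZMod p) →ₐ[ZMod p] MvPolynomial (Fin n) (ZMod p) :=
  aeval (fun j : Fin n => ∑ i : Fin n, C ((g : Matrix (Fin n) (Fin n) (ZMod p)) i j) * X i)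

open scoped Polynomial

theorem prod_sub_smul_eq (p : ℕ) [Fact p.Prime] {A : Type*} [CommRing A] [IsDomain A]
    [Algebra (ZMod p) A] (z t : A) :
    ∏ c : ZMod p, (z - c • t) = z ^ p - t ^ (p - 1) * z := by
  have hp := (Fact.out : p.Prime).two_le
  obtain rfl | ht := eq_or_ne t 0
  · simp [Finset.prod_const, ZMod.card, zero_pow (by omega : p - 1 ≠ 0)]
  set G : A[X] := Polynomial.X ^ p - Polynomial.C (t ^ (p - 1)) * Polynomial.X
  suffices h : ∏ c : ZMod p, (Polynomial.X - Polynomial.C (c • t)) = G by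
    simpa [G, Polynomial.eval_prod] using congrArg (Polynomial.eval z) h
  have hG : G.Monic := Polynomial.monic_X_pow_sub <|
    (Polynomial.degree_C_mul_X_le _).trans_lt (by exact_mod_cast (by omega : 1 < p))
  have hroot (c : ZMod p) : G.IsRoot (c • t) := by
    simp only [G, Polynomial.IsRoot, Polynomial.eval_sub, Polynomial.eval_pow, Polynomial.eval_mul,
      Polynomial.eval_X, Polynomial.eval_C, _root_.smul_pow, ZMod.pow_card, mul_smul_comm,
      ← pow_succ, Nat.sub_add_cancel (by omega : 1 ≤ p), sub_self]
  have hinj : Function.Injective fun c : ZMod p => c • t := fun a b h =>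
    (algebraMap (ZMod p) A).injective (mul_right_cancel₀ ht (by simpa [Algebra.smul_def] using h))
  have hdvd : ((Finset.univ.val.map fun c : ZMod p => c • t).map
      fun a => Polynomial.X - Polynomial.C a).prod ∣ G := by
    rw [Multiset.prod_X_sub_C_dvd_iff_le_roots hG.ne_zero,
      Multiset.le_iff_subset (Finset.univ.nodup.map hinj)]
    intro a ha
    obtain ⟨c, -, rfl⟩ := Multiset.mem_map.mp ha
    exact (Polynomial.mem_roots hG.ne_zero).mpr (hroot c)
  rw [Multiset.map_map] at hdvd
  symm
  refine Polynomial.eq_of_monic_of_dvd_of_natDegree_le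
    (Polynomial.monic_prod_of_monic _ _ fun c _ => Polynomial.monic_X_sub_C _) hG hdvd ?_
  rw [Polynomial.natDegree_prod_of_monic _ _ fun c _ => Polynomial.monic_X_sub_C _]
  simp only [Polynomial.natDegree_X_sub_C, Finset.sum_const, Finset.card_univ, ZMod.card,
    smul_eq_mul, mul_one, G]
  compute_degree!
  omega

namespace Polynomial

section CharP
variable {p : ℕ} [Fact p.Prime] {R : Type*} [CommRing R] [CharP R p]

theorem coeff_pow_char_mul (g : R[X]) (m : ℕ) : (g ^ p).coeff (p * m) = g.coeff m ^ p := by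
  rw [← map_frobenius_expand, coeff_map, coeff_expand_mul' (Fact.out : p.Prime).pos,
    frobenius_def]

theorem coeff_pow_char_of_not_dvd (g : R[X]) {m : ℕ} (hm : ¬ p ∣ m) : (g ^ p).coeff m = 0 := by
  rw [← map_frobenius_expand, coeff_map, coeff_expand (Fact.out : p.Prime).pos, if_neg hm,
    map_zero]

end CharP

def IsLinearized (p : ℕ) {R : Type*} [Semiring R] (g : R[X]) : Prop :=
  ∀ m ∉ Set.range (p ^ ·), g.coeff m = 0

theorem isLinearized_X {p : ℕ} {R : Type*} [Semiring R] : IsLinearized p (X : R[X]) :=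
  fun _ hm => coeff_X_of_ne_one fun h => hm ⟨0, h.symm ▸ pow_zero p⟩

namespace IsLinearized

variable {p : ℕ} {R : Type*} [CommRing R] {g g' : R[X]}

theorem exists_pow_eq (hg : IsLinearized p g) {m : ℕ} (hm : m ∈ g.support) : ∃ i, p ^ i = m :=
  not_not.mp fun h => mem_support_iff.mp hm (hg m h)

theorem sub (hg : IsLinearized p g) (hg' : IsLinearized p g') : IsLinearized p (g - g') :=
  fun m hm => by rw [coeff_sub, hg m hm, hg' m hm, sub_zero]

theorem C_mul (hg : IsLinearized p g) (a : R) : IsLinearized p (C a * g) :=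
  fun m hm => by rw [coeff_C_mul, hg m hm, mul_zero]

theorem pow_char [Fact p.Prime] [CharP R p] (hg : IsLinearized p g) : IsLinearized p (g ^ p) := by
  intro m hm
  by_cases hdvd : p ∣ m
  · obtain ⟨m, rfl⟩ := hdvd
    rw [coeff_pow_char_mul, hg m fun ⟨i, hi⟩ => hm ⟨i + 1, by simp [← hi, pow_succ']⟩,
      zero_pow (Fact.out : p.Prime).ne_zero]
  · exact coeff_pow_char_of_not_dvd g hdvd

theorem comp_X_sub_C [Fact p.Prime] [CharP R p] (hg : IsLinearized p g) (a : R) :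
    g.comp (X - C a) = g - C (g.eval a) := by
  have hpow : ∀ m ∈ g.support, (X - C a) ^ m = X ^ m - C (a ^ m) := fun m hm => by
    obtain ⟨i, rfl⟩ := hg.exists_pow_eq hm
    rw [sub_pow_char_pow, C_pow]
  rw [comp_eq_sum_left, eval_eq_sum, sum_def, sum_def, Finset.sum_congr rfl fun m hm => by
    rw [hpow m hm], map_sum]
  simp only [mul_sub, ← Polynomial.C_mul, Finset.sum_sub_distrib, ← as_sum_support_C_mul_X_pow]

theorem eval_smul [Fact p.Prime] [Algebra (ZMod p) R] (hg : IsLinearized p g) (c : ZMod p)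
    (y : R) : g.eval (c • y) = c • g.eval y := by
  rw [eval_eq_sum, eval_eq_sum, sum_def, sum_def, Finset.smul_sum]
  refine Finset.sum_congr rfl fun m hm => ?_
  obtain ⟨i, rfl⟩ := hg.exists_pow_eq hm
  rw [_root_.smul_pow, ZMod.pow_card_pow, mul_smul_comm]

end IsLinearized

end Polynomial

namespace MvPolynomial

variable {σ τ R : Type*}

def HasMonicLead [CommSemiring R] (w : τ → ℕ) (g : MvPolynomial τ R) (m : τ →₀ ℕ) : Prop :=
  coeff m g = 1 ∧ ∀ d ∈ g.support, d ≠ m → Finsupp.weight w d < Finsupp.weight w m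

namespace HasMonicLead

variable [CommSemiring R] {w : τ → ℕ} {g g' : MvPolynomial τ R} {m m' : τ →₀ ℕ}

theorem weight_le (h : HasMonicLead w g m) {d : τ →₀ ℕ} (hd : d ∈ g.support) :
    Finsupp.weight w d ≤ Finsupp.weight w m := by
  obtain rfl | hne := eq_or_ne d m
  · exact le_rfl
  · exact (h.2 d hd hne).le

theorem one : HasMonicLead w (1 : MvPolynomial τ R) 0 := by
  classical
  refine ⟨coeff_zero_one, fun d hd hne => absurd ?_ (mem_support_iff.mp hd)⟩
  rw [coeff_one, if_neg (Ne.symm hne)]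

theorem mul (h : HasMonicLead w g m) (h' : HasMonicLead w g' m') :
    HasMonicLead w (g * g') (m + m') := by
  classical
  have hlt : ∀ a ∈ g.support, ∀ b ∈ g'.support, ¬(a = m ∧ b = m') →
      Finsupp.weight w (a + b) < Finsupp.weight w (m + m') := by
    intro a ha b hb hab
    rw [map_add, map_add]
    rcases not_and_or.mp hab with hab | hab
    · exact add_lt_add_of_lt_of_le (h.2 a ha hab) (h'.weight_le hb)
    · exact add_lt_add_of_le_of_lt (h.weight_le ha) (h'.2 b hb hab)
  refine ⟨?_, fun d hd hne => ?_⟩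
  · rw [coeff_mul, Finset.sum_eq_single (m, m'), h.1, h'.1, one_mul]
    · rintro ⟨a, b⟩ hab hne
      by_contra hprod
      have := hlt a (mem_support_iff.mpr (left_ne_zero_of_mul hprod)) b
        (mem_support_iff.mpr (right_ne_zero_of_mul hprod)) fun h => hne (Prod.ext h.1 h.2)
      rw [Finset.HasAntidiagonal.mem_antidiagonal.mp hab] at this
      exact this.false
    · exact fun hnot => (hnot (by simp)).elim
  · obtain ⟨a, ha, b, hb, rfl⟩ := Finset.mem_add.mp (support_mul g g' hd)
    exact hlt a ha b hb fun h => hne (by rw [h.1, h.2])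

theorem prod {ι : Type*} (s : Finset ι) {g : ι → MvPolynomial τ R} {m : ι → τ →₀ ℕ}
    (h : ∀ i ∈ s, HasMonicLead w (g i) (m i)) :
    HasMonicLead w (∏ i ∈ s, g i) (∑ i ∈ s, m i) := by
  classical
  induction s using Finset.induction_on with
  | empty => simpa using one
  | insert i s hi ih =>
    rw [Finset.prod_insert hi, Finset.sum_insert hi]
    exact (h i (Finset.mem_insert_self i s)).mul (ih fun j hj => h j (Finset.mem_insert_of_mem hj))

theorem pow (h : HasMonicLead w g m) (k : ℕ) : HasMonicLead w (g ^ k) (k • m) := by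
  simpa using prod (Finset.range k) fun _ _ => h

end HasMonicLead

theorem injective_aeval_of_hasMonicLead [CommRing R] {w : τ → ℕ} {g : σ → MvPolynomial τ R}
    {m : σ → τ →₀ ℕ} (hg : ∀ s, HasMonicLead w (g s) (m s))
    (hm : Function.Injective fun e : σ →₀ ℕ => e.sum fun s k => k • m s) :
    Function.Injective (aeval g : MvPolynomial σ R →ₐ[R] MvPolynomial τ R) := by
  set M : (σ →₀ ℕ) → τ →₀ ℕ := fun e => e.sum fun s k => k • m s
  have hlead (e : σ →₀ ℕ) : HasMonicLead w (e.prod fun s k => g s ^ k) (M e) :=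
    HasMonicLead.prod _ fun s _ => (hg s).pow (e s)
  rw [injective_iff_map_eq_zero]
  intro Q hQ
  by_contra hne
  obtain ⟨e₀, he₀, hmax⟩ := Finset.exists_max_image Q.support (Finsupp.weight w ∘ M)
    (support_nonempty.mpr hne)
  have hcoeff : coeff (M e₀) (aeval g Q) = coeff e₀ Q := by
    conv_lhs => rw [Q.as_sum, map_sum]
    rw [coeff_sum, Finset.sum_eq_single e₀]
    · rw [aeval_monomial, algebraMap_eq, coeff_C_mul, (hlead e₀).1, mul_one]
    · intro e he hne
      have : coeff (M e₀) (e.prod fun s k => g s ^ k) = 0 := notMem_support_iff.mp fun hmem =>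
        ((hlead e).2 _ hmem fun h => hne (hm h).symm).not_ge (hmax e he)
      rw [aeval_monomial, algebraMap_eq, coeff_C_mul, this, mul_zero]
    · exact fun h => absurd he₀ h
  rw [hQ, coeff_zero] at hcoeff
  exact mem_support_iff.mp he₀ hcoeff.symm

theorem exists_eq_smul_of_mem_support_pow {σ : Type*} {p : ℕ} [Fact p.Prime]
    {Q : MvPolynomial σ (ZMod p)} {m : σ →₀ ℕ} (hm : m ∈ (Q ^ p).support) :
    ∃ e ∈ Q.support, m = p • e := by
  classical
  rw [← expand_zmod] at hm
  obtain ⟨e, he, rfl⟩ := Finset.mem_image.mp (support_expand_subset Q hm)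
  exact ⟨e, he, rfl⟩

end MvPolynomial

noncomputable def linComb (p n k : ℕ) (c : Fin n → ZMod p) : MvPolynomial (Fin n) (ZMod p) :=
  ∑ j ∈ Finset.univ.filter (fun j : Fin n => j.val < k), C (c j) * X j

theorem linComb_succ {p n k : ℕ} (hk : k < n) (c : Fin n → ZMod p) :
    linComb p n (k + 1) c = linComb p n k c + C (c ⟨k, hk⟩) * X ⟨k, hk⟩ := by
  have hfilter : Finset.univ.filter (fun j : Fin n => j.val < k + 1) =
      insert ⟨k, hk⟩ (Finset.univ.filter fun j : Fin n => j.val < k) := by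
    ext j
    simp only [Finset.mem_filter, Finset.mem_insert, Finset.mem_univ, true_and, Fin.ext_iff]
    omega
  rw [linComb, hfilter, Finset.sum_insert (by simp), add_comm, linComb]

theorem linComb_congr {p n k : ℕ} {c c' : Fin n → ZMod p}
    (h : ∀ j : Fin n, j.val < k → c j = c' j) : linComb p n k c = linComb p n k c' :=
  Finset.sum_congr rfl fun j hj => by rw [h j (Finset.mem_filter.mp hj).2]

section V
variable {p n : ℕ} [Fact p.Prime]

theorem V_eq_image (k : ℕ) : V p n k = Finset.univ.image (linComb p n k) := rfl

theorem zero_mem_V (k : ℕ) : 0 ∈ V p n k :=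
  Finset.mem_image.mpr ⟨0, Finset.mem_univ _, by simp⟩

theorem V_zero : V p n 0 = {0} := by
  have : linComb p n 0 = fun _ => 0 := funext fun c => by simp [linComb]
  rw [V_eq_image, this, Finset.image_const Finset.univ_nonempty]

theorem exists_eq_single_of_mem_support_of_mem_V {k : ℕ} {u : MvPolynomial (Fin n) (ZMod p)}
    (hu : u ∈ V p n k) {d : Fin n →₀ ℕ} (hd : d ∈ u.support) :
    ∃ j : Fin n, j.val < k ∧ d = Finsupp.single j 1 := by
  classical
  obtain ⟨c, -, rfl⟩ := Finset.mem_image.mp hu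
  obtain ⟨j, hj, hdj⟩ := Finset.mem_biUnion.mp (support_sum hd)
  rw [C_mul_X_eq_monomial] at hdj
  exact ⟨j, (Finset.mem_filter.mp hj).2, Finset.mem_singleton.mp (support_monomial_subset hdj)⟩

theorem coeff_single_eq_zero_of_mem_V {k : ℕ} {u : MvPolynomial (Fin n) (ZMod p)}
    (hu : u ∈ V p n k) {t : Fin n} (ht : k ≤ t.val) : coeff (Finsupp.single t 1) u = 0 :=
  notMem_support_iff.mp fun h => by
    obtain ⟨j, hj, hjt⟩ := exists_eq_single_of_mem_support_of_mem_V hu h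
    have := congrArg Fin.val (Finsupp.single_left_injective one_ne_zero hjt)
    omega

theorem hasMonicLead_X_sub {t : Fin n} {u : MvPolynomial (Fin n) (ZMod p)} (hu : u ∈ V p n t) :
    HasMonicLead Fin.val (X t - u) (Finsupp.single t 1) := by
  classical
  refine ⟨?_, fun d hd hne => ?_⟩
  · rw [coeff_sub, coeff_X, coeff_single_eq_zero_of_mem_V hu le_rfl, sub_zero, if_pos rfl]
  rcases Finset.mem_union.mp (support_sub _ _ _ hd) with h | h
  · exact absurd (Finset.mem_singleton.mp (support_X (R := ZMod p) ▸ h)) hne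
  · obtain ⟨j, hj, rfl⟩ := exists_eq_single_of_mem_support_of_mem_V hu h
    simpa [Finsupp.weight_single] using hj

theorem V_succ {k : ℕ} (hk : k < n) :
    V p n (k + 1) = (V p n k ×ˢ Finset.univ).image fun uc => uc.1 + C uc.2 * X ⟨k, hk⟩ := by
  classical
  ext u
  simp only [V_eq_image, Finset.mem_image, Finset.mem_product, Finset.mem_univ, true_and,
    and_true, Prod.exists]
  constructor
  · rintro ⟨c, rfl⟩
    exact ⟨_, c ⟨k, hk⟩, ⟨c, rfl⟩, (linComb_succ hk c).symm⟩
  · rintro ⟨_, a, ⟨c, rfl⟩, rfl⟩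
    refine ⟨Function.update c ⟨k, hk⟩ a, ?_⟩
    rw [linComb_succ hk, Function.update_self, linComb_congr (k := k) (c' := c) fun j hj =>
      Function.update_of_ne (fun h => hj.ne (congrArg Fin.val h)) _ _]

theorem injOn_V_succ {k : ℕ} (hk : k < n) :
    Set.InjOn (fun uc : MvPolynomial (Fin n) (ZMod p) × ZMod p => uc.1 + C uc.2 * X ⟨k, hk⟩)
      (V p n k ×ˢ (Finset.univ : Finset (ZMod p)) : Finset _) := by
  classical
  rintro ⟨u, a⟩ hu ⟨u', a'⟩ hu' h
  simp only [Finset.coe_product, Set.mem_prod, Finset.mem_coe] at hu hu' h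
  have ha : a = a' := by
    simpa [coeff_single_eq_zero_of_mem_V (t := ⟨k, hk⟩) hu.1 le_rfl,
      coeff_single_eq_zero_of_mem_V (t := ⟨k, hk⟩) hu'.1 le_rfl]
      using congrArg (coeff (Finsupp.single ⟨k, hk⟩ 1)) h
  subst ha
  rw [add_right_cancel h]

theorem card_V {k : ℕ} (hk : k ≤ n) : (V p n k).card = p ^ k := by
  induction k with
  | zero => rw [V_zero, Finset.card_singleton, pow_zero]
  | succ k ih =>
    rw [V_succ hk, Finset.card_image_of_injOn (injOn_V_succ hk), Finset.card_product,
      ih (by omega), Finset.card_univ, ZMod.card, pow_succ]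

end V

section f
variable {p n : ℕ} [Fact p.Prime]

theorem f_zero : f p n 0 = Polynomial.X := by
  rw [f, V_zero, Finset.prod_singleton, map_zero, sub_zero]

theorem monic_f (k : ℕ) : (f p n k).Monic :=
  Polynomial.monic_prod_of_monic _ _ fun u _ => Polynomial.monic_X_sub_C u

theorem natDegree_f {k : ℕ} (hk : k ≤ n) : (f p n k).natDegree = p ^ k := by
  rw [f, Polynomial.natDegree_prod_of_monic _ _ fun u _ => Polynomial.monic_X_sub_C u]
  simp [card_V hk]

theorem eval_X_f (t : Fin n) : (f p n t).eval (X t) = ∏ u ∈ V p n t, (X t - u) := by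
  simp [f, Polynomial.eval_prod]

theorem f_succ_eq_prod_comp {k : ℕ} (hk : k < n) :
    f p n (k + 1) =
      ∏ a : ZMod p, (f p n k).comp (Polynomial.X - Polynomial.C (a • X ⟨k, hk⟩)) := by
  rw [f, V_succ hk, Finset.prod_image (injOn_V_succ hk), Finset.prod_product_right]
  refine Finset.prod_congr rfl fun a _ => ?_
  rw [f, Polynomial.prod_comp]
  refine Finset.prod_congr rfl fun u _ => ?_
  simp only [Polynomial.sub_comp, Polynomial.X_comp, Polynomial.C_comp, map_add, smul_eq_C_mul]
  ring

theorem f_succ_of_isLinearized {k : ℕ} (hk : k < n) (hf : (f p n k).IsLinearized p) :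
    f p n (k + 1) = f p n k ^ p - Polynomial.C (hGen p n ⟨k, hk⟩) * f p n k := by
  rw [f_succ_eq_prod_comp hk, hGen, Polynomial.C_pow, ← prod_sub_smul_eq]
  refine Finset.prod_congr rfl fun a _ => ?_
  rw [hf.comp_X_sub_C, hf.eval_smul, Polynomial.smul_C]

theorem isLinearized_f {k : ℕ} (hk : k ≤ n) : (f p n k).IsLinearized p := by
  induction k with
  | zero => exact f_zero (p := p) (n := n) ▸ Polynomial.isLinearized_X
  | succ k ih =>
    have hf := ih (by omega)
    rw [f_succ_of_isLinearized hk hf]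
    exact hf.pow_char.sub (hf.C_mul _)

theorem f_succ {k : ℕ} (hk : k < n) :
    f p n (k + 1) = f p n k ^ p - Polynomial.C (hGen p n ⟨k, hk⟩) * f p n k :=
  f_succ_of_isLinearized hk (isLinearized_f hk.le)

end f

section d
variable {p n : ℕ} [Fact p.Prime]

theorem d_self {k : ℕ} (hk : k ≤ n) : d p n k k = 1 := by
  rw [d, Nat.sub_self, pow_zero, one_mul, ← natDegree_f hk, (monic_f k).coeff_natDegree]

theorem d_succ_zero {k : ℕ} (hk : k < n) : d p n (k + 1) 0 = hGen p n ⟨k, hk⟩ * d p n k 0 := by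
  have hcoeff : (f p n (k + 1)).coeff 1 = -(hGen p n ⟨k, hk⟩ * (f p n k).coeff 1) := by
    rw [f_succ hk, Polynomial.coeff_sub, Polynomial.coeff_C_mul,
      Polynomial.coeff_pow_char_of_not_dvd _ (Fact.out : p.Prime).not_dvd_one, zero_sub]
  rw [d, d, pow_zero, hcoeff, Nat.sub_zero, Nat.sub_zero, pow_succ]
  ring

theorem d_succ_succ {k i : ℕ} (hk : k < n) (hi : i < k) :
    d p n (k + 1) (i + 1) = d p n k i ^ p + hGen p n ⟨k, hk⟩ * d p n k (i + 1) := by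
  have hcoeff : (f p n (k + 1)).coeff (p ^ (i + 1)) =
      (f p n k).coeff (p ^ i) ^ p - hGen p n ⟨k, hk⟩ * (f p n k).coeff (p ^ (i + 1)) := by
    rw [f_succ hk, Polynomial.coeff_sub, Polynomial.coeff_C_mul, pow_succ',
      Polynomial.coeff_pow_char_mul]
  obtain ⟨b, hb⟩ : ∃ b, k - i = b + 1 := ⟨k - (i + 1), by omega⟩
  rw [d, d, d, hcoeff, show k + 1 - (i + 1) = k - i by omega, show k - (i + 1) = b by omega, hb,
    mul_pow, ← pow_mul, mul_comm (b + 1) p, pow_mul,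
    neg_one_pow_char (MvPolynomial (Fin n) (ZMod p)) p]
  ring

end d

section hGen
variable {p n : ℕ} [Fact p.Prime]

theorem hasMonicLead_hGen (t : Fin n) :
    HasMonicLead Fin.val (hGen p n t) (Finsupp.single t ((p - 1) * (V p n t).card)) := by
  have := (HasMonicLead.prod (V p n t) fun u hu => hasMonicLead_X_sub hu).pow (p - 1)
  simpa [hGen, eval_X_f, Finsupp.smul_single] using this

theorem injective_aeval_hGen :
    Function.Injective (aeval (hGen p n) : MvPolynomial (Fin n) (ZMod p) →ₐ[ZMod p] _) := by
  refine injective_aeval_of_hasMonicLead hasMonicLead_hGen fun e e' h => ?_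
  ext s
  have := DFunLike.congr_fun h s
  simp [Finsupp.single_apply] at this
  exact this.resolve_right (not_or.mpr ⟨by have := (Fact.out : p.Prime).two_le; omega,
    Finset.nonempty_iff_ne_empty.mp ⟨0, zero_mem_V _⟩⟩)

end hGen

def dicksonForm {A : Type*} [CommSemiring A] (p : ℕ) (x : ℕ → A) : ℕ → ℕ → A
  | 0, 0 => 1
  | 0, _ + 1 => 0
  | k + 1, 0 => x k * dicksonForm p x k 0
  | k + 1, i + 1 => dicksonForm p x k i ^ p + x k * dicksonForm p x k (i + 1)

section dicksonForm
variable {A B : Type*} [CommSemiring A] [CommSemiring B] {p : ℕ}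

theorem dicksonForm_of_lt (hp : p ≠ 0) (x : ℕ → A) {k i : ℕ} (h : k < i) :
    dicksonForm p x k i = 0 := by
  induction k generalizing i with
  | zero => obtain ⟨i, rfl⟩ := Nat.exists_eq_add_of_lt h; rfl
  | succ k ih =>
    obtain ⟨i, rfl⟩ := Nat.exists_eq_add_of_lt h
    rw [dicksonForm, ih (by omega), ih (by omega), zero_pow hp, mul_zero, add_zero]

theorem dicksonForm_self (hp : p ≠ 0) (x : ℕ → A) (k : ℕ) : dicksonForm p x k k = 1 := by
  induction k with
  | zero => rfl
  | succ k ih => rw [dicksonForm, ih, dicksonForm_of_lt hp x k.lt_succ_self, one_pow, mul_zero,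
      add_zero]

theorem map_dicksonForm {F : Type*} [FunLike F A B] [RingHomClass F A B] (φ : F) (x : ℕ → A)
    (k i : ℕ) : φ (dicksonForm p x k i) = dicksonForm p (φ ∘ x) k i := by
  induction k generalizing i with
  | zero => cases i <;> simp [dicksonForm]
  | succ k ih => cases i <;> simp [dicksonForm, ih]

end dicksonForm

theorem Fin.extend_val_apply {A : Type*} {n k : ℕ} (x : Fin n → A) (y : ℕ → A) (hk : k < n) :
    Function.extend Fin.val x y k = x ⟨k, hk⟩ :=
  Fin.val_injective.extend_apply x y ⟨k, hk⟩

theorem d_eq_dicksonForm {p n : ℕ} [Fact p.Prime] {k i : ℕ} (hk : k ≤ n) (hi : i ≤ k) :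
    d p n k i = dicksonForm p (Function.extend Fin.val (hGen p n) 0) k i := by
  have hp := (Fact.out : p.Prime).ne_zero
  induction k generalizing i with
  | zero =>
    obtain rfl : i = 0 := by omega
    exact d_self hk
  | succ k ih =>
    rcases i with _ | i
    · rw [d_succ_zero hk, dicksonForm, ih (by omega) (Nat.zero_le _), Fin.extend_val_apply _ _ hk]
    rcases Nat.lt_or_ge i k with hik | hik
    swap
    · obtain rfl : i = k := by omega
      rw [d_self hk, dicksonForm_self hp]
    rw [d_succ_succ hk (by omega), dicksonForm, ih (by omega) (by omega), ih (by omega) (by omega),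
      Fin.extend_val_apply _ _ hk]

/-- `D_{k,i}`, with `x_{t+1} = X t` (and `0` past `n`). -/
noncomputable def dicksonExpansion (p n k i : ℕ) : MvPolynomial (Fin n) (ZMod p) :=
  dicksonForm p (Function.extend Fin.val X 0) k i

/-- The exponent of `x_{i+1} ⋯ x_k`. -/
noncomputable def admissibleExponent (n k i : ℕ) : Fin n →₀ ℕ :=
  Finsupp.equivFunOnFinite.symm fun t => if i ≤ t.val ∧ t.val < k then 1 else 0

theorem admissibleExponent_self (n k : ℕ) : admissibleExponent n k k = 0 := by
  ext t
  simp [admissibleExponent]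

theorem admissibleExponent_succ {n k i : ℕ} (hk : k < n) (hi : i ≤ k) :
    admissibleExponent n (k + 1) i = Finsupp.single ⟨k, hk⟩ 1 + admissibleExponent n k i := by
  ext t
  simp only [admissibleExponent, Finsupp.equivFunOnFinite_symm_apply_apply, Finsupp.add_apply,
    Finsupp.single_apply, Fin.ext_iff]
  split_ifs <;> omega

section dicksonExpansion
variable {p n : ℕ} [Fact p.Prime]

theorem aeval_dicksonExpansion {k i : ℕ} (hk : k ≤ n) (hi : i ≤ k) :
    aeval (hGen p n) (dicksonExpansion p n k i) = d p n k i := by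
  rw [dicksonExpansion, map_dicksonForm, d_eq_dicksonForm hk hi]
  congr 1
  funext k
  rw [Function.comp_apply, Function.apply_extend (aeval (hGen p n))]
  congr 1
  exact funext (aeval_X _)

theorem coeff_admissibleExponent_dicksonExpansion {k i : ℕ} (hk : k ≤ n) (hi : i ≤ k) :
    coeff (admissibleExponent n k i) (dicksonExpansion p n k i) = 1 := by
  have hp := (Fact.out : p.Prime).ne_zero
  induction k generalizing i with
  | zero =>
    obtain rfl : i = 0 := by omega
    rw [admissibleExponent_self, dicksonExpansion, dicksonForm_self hp, coeff_zero_one]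
  | succ k ih =>
    rcases i with _ | i
    · rw [dicksonExpansion, dicksonForm, Fin.extend_val_apply _ _ hk,
        admissibleExponent_succ hk (Nat.zero_le _), coeff_X_mul]
      exact ih (by omega) (Nat.zero_le _)
    rcases Nat.lt_or_ge i k with hik | hik
    swap
    · obtain rfl : i = k := by omega
      rw [admissibleExponent_self, dicksonExpansion, dicksonForm_self hp, coeff_zero_one]
    have hpow : coeff (admissibleExponent n (k + 1) (i + 1)) (dicksonExpansion p n k i ^ p) =
        0 := by
      rw [← expand_zmod]
      refine coeff_expand_of_not_dvd _ (i := ⟨k, hk⟩) ?_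
      simpa [admissibleExponent, hik] using (Fact.out : p.Prime).not_dvd_one
    rw [dicksonExpansion, dicksonForm, coeff_add, ← dicksonExpansion, hpow, zero_add,
      Fin.extend_val_apply _ _ hk, admissibleExponent_succ hk hik, coeff_X_mul]
    exact ih (by omega) hik

theorem MonotoneOn.of_single_add {n k : ℕ} (hk : k < n) {e : Fin n →₀ ℕ}
    (h : MonotoneOn ⇑(Finsupp.single ⟨k, hk⟩ 1 + e : Fin n →₀ ℕ) {t | t.val < k + 1}) :
    MonotoneOn e {t | t.val < k} := fun a (ha : a.val < k) b (hb : b.val < k) hab => by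
  simpa [Finsupp.single_apply, Fin.ext_iff, ha.ne', hb.ne'] using
    h (show a.val < k + 1 by omega) (show b.val < k + 1 by omega) hab

theorem not_monotoneOn_smul_admissibleExponent {p n k i : ℕ} (hp : p ≠ 0) (hk : k < n)
    (hi : i < k) : ¬ MonotoneOn ⇑(p • admissibleExponent n k i) {t | t.val < k + 1} := fun h => by
  have := h (a := ⟨k - 1, by omega⟩) (b := ⟨k, hk⟩) (show k - 1 < k + 1 by omega)
    (show k < k + 1 by omega) (Fin.mk_le_mk.mpr (Nat.sub_le k 1))
  simp [admissibleExponent] at this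
  exact hp (this (by omega) (by omega))

theorem eq_admissibleExponent_of_mem_support {k i : ℕ} (hk : k ≤ n) (hi : i ≤ k)
    {e : Fin n →₀ ℕ} (he : e ∈ (dicksonExpansion p n k i).support)
    (hmono : MonotoneOn e {t | t.val < k}) : e = admissibleExponent n k i := by
  have hp := (Fact.out : p.Prime).ne_zero
  induction k generalizing i e with
  | zero =>
    obtain rfl : i = 0 := by omega
    rw [dicksonExpansion, dicksonForm_self hp, support_one, Finset.mem_singleton] at he
    rw [he, admissibleExponent_self]
  | succ k ih =>
    have hX {i : ℕ} (hi : i ≤ k)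
        (hmem : e ∈ (X (⟨k, hk⟩ : Fin n) * dicksonExpansion p n k i).support) :
        e = admissibleExponent n (k + 1) i := by
      classical
      rw [support_X_mul, Finset.mem_map] at hmem
      obtain ⟨e', he', rfl⟩ := hmem
      rw [addLeftEmbedding_apply, ih (by omega) hi he' (hmono.of_single_add hk),
        admissibleExponent_succ hk hi]
    rcases i with _ | i
    · rw [dicksonExpansion, dicksonForm, Fin.extend_val_apply _ _ hk] at he
      exact hX (Nat.zero_le _) he
    rcases Nat.lt_or_ge i k with hik | hik
    swap
    · obtain rfl : i = k := by omega
      rw [dicksonExpansion, dicksonForm_self hp, support_one, Finset.mem_singleton] at he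
      rw [he, admissibleExponent_self]
    rw [dicksonExpansion, dicksonForm, Fin.extend_val_apply _ _ hk] at he
    rcases Finset.mem_union.mp (support_add he) with hpow | hmul
    · obtain ⟨e', he', rfl⟩ := exists_eq_smul_of_mem_support_pow hpow
      have hmono' : MonotoneOn e' {t | t.val < k} := fun a ha b hb hab =>
        Nat.le_of_mul_le_mul_left (hmono (Nat.lt_succ_of_lt ha) (Nat.lt_succ_of_lt hb) hab)
          (Nat.pos_of_ne_zero hp)
      rw [ih (by omega) hik.le he' hmono'] at hmono
      exact absurd hmono (not_monotoneOn_smul_admissibleExponent hp hk hik)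
    · exact hX hik hmul

end dicksonExpansion

theorem stmt14_general (p n : ℕ) [Fact p.Prime] (j : ℕ) (hj : j ≤ n - 1)
    (P : MvPolynomial (Fin n) (ZMod p)) (hP : aeval (hGen p n) P = d p n n j) :
    MvPolynomial.coeff
      (Finsupp.equivFunOnFinite.symm (fun t : Fin n => if t.val < j then 0 else 1)) P = 1 ∧
    (Finsupp.equivFunOnFinite.symm (fun t : Fin n => if t.val < j then 0 else 1)) ∈
      P.support ∧
    ∀ e ∈ P.support, (∀ a b : Fin n, a ≤ b → e a ≤ e b) →
      e = Finsupp.equivFunOnFinite.symm (fun t : Fin n => if t.val < j then 0 else 1) := by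
  have hjn : j ≤ n := hj.trans (Nat.sub_le n 1)
  obtain rfl : P = dicksonExpansion p n n j :=
    injective_aeval_hGen (hP.trans (aeval_dicksonExpansion le_rfl hjn).symm)
  have hexp : Finsupp.equivFunOnFinite.symm (fun t : Fin n => if t.val < j then 0 else 1) =
      admissibleExponent n n j := by
    ext t
    simp only [admissibleExponent, Finsupp.equivFunOnFinite_symm_apply_apply, t.isLt, and_true]
    split_ifs <;> omega
  have hcoeff := coeff_admissibleExponent_dicksonExpansion (p := p) le_rfl hjn
  rw [hexp]
  exact ⟨hcoeff, mem_support_iff.mpr (hcoeff ▸ one_ne_zero),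
    fun e he hmono => eq_admissibleExponent_of_mem_support le_rfl hjn he fun a _ b _ => hmono a b⟩

/-- the monomial `h_{j+1} ⋯ h_n` occurs in `d_{n,j}` with coefficient `1`,
and it is the unique monomial of `d_{n,j}` with weakly increasing exponent vector. -/
theorem stmt14 (p n : ℕ) [Fact p.Prime] (j : ℕ) (hj : j ≤ n - 1) (hn : 1 ≤ n)
    (P : MvPolynomial (Fin n) (ZMod p)) (hP : aeval (hGen p n) P = d p n n j) :
    MvPolynomial.coeff
      (Finsupp.equivFunOnFinite.symm (fun t : Fin n => if t.val < j then 0 else 1)) P = 1 ∧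
    (Finsupp.equivFunOnFinite.symm (fun t : Fin n => if t.val < j then 0 else 1)) ∈
      P.support ∧
    ∀ e ∈ P.support, (∀ a b : Fin n, a ≤ b → e a ≤ e b) →
      e = Finsupp.equivFunOnFinite.symm (fun t : Fin n => if t.val < j then 0 else 1) :=
  stmt14_general p n j hj P hP
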